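/- (Variational formula for the generalized entropy.) Let m > 1, let P be a probability measure on ℝⁿ with density P(x), and let Q be the uniform probability measure on a measurable set S ⊆ ℝⁿ of finite positive Lebesgue volume Ω containing the support of P. Then G(P) = Ω^{1−m} · sup_h { ∫ (m/(m−1))·h(x)^{m−1} dP(x) − ∫ h(z)^m dQ(z) }, where the supremum is over measurable functions h: ℝⁿ → [0,∞) for which both integrals are well-defined, and the supremum is attained at h = dP/dQ. -/

import Mathlib

/-!
Young's inequality with the conjugate exponents `m/(m-1)` and `m`, applied pointwise to `h` and
`Ω p`, gives `(m/(m-1)) h^{m-1} p ≤ Ω⁻¹ h^m + Ω^{m-1}/(m-1) p^m`, with equality when `h = Ω p`.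
Integrating against Lebesgue measure on `S` (where `P` lives) bounds every value of the
variational functional by `Ω^{m-1} G(P)`, and `h = Ω p = dP/dQ` attains the bound.
-/

open MeasureTheory Set

/-- The feasible values of the variational formula for the generalized entropy:
values `∫ (m/(m−1)) h^{m−1} dP − ∫ h^m dQ` over measurable nonnegative `h` for which
both integrals are well-defined. -/
def entVarSet {n : ℕ} (m : ℝ) (P Q : Measure (Fin n → ℝ)) : Set ℝ :=
  {r : ℝ | ∃ h : (Fin n → ℝ) → ℝ, Measurable h ∧ (∀ x, 0 ≤ h x) ∧
    Integrable (fun x => (m / (m - 1)) * h x ^ (m - 1)) P ∧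
    Integrable (fun x => h x ^ m) Q ∧
    r = (∫ x, (m / (m - 1)) * h x ^ (m - 1) ∂P) - ∫ x, h x ^ m ∂Q}

open scoped ENNReal

namespace Real

lemma mul_rpow_sub_one {m t : ℝ} (hm : 1 < m) (ht : 0 ≤ t) : t * t ^ (m - 1) = t ^ m := by
  conv_rhs => rw [← add_sub_cancel 1 m, rpow_add' ht (by linarith), rpow_one]

lemma rpow_sub_one_mul_le {m s t : ℝ} (hm : 1 < m) (hs : 0 ≤ s) (ht : 0 ≤ t) :
    s ^ (m - 1) * t ≤ (m - 1) / m * s ^ m + t ^ m / m := by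
  have hconj : (m / (m - 1)).HolderConjugate m := (HolderConjugate.conjExponent hm).symm
  have hpow : (s ^ (m - 1)) ^ (m / (m - 1)) = s ^ m := by
    rw [← rpow_mul hs, mul_div_cancel₀ _ (by linarith)]
  calc s ^ (m - 1) * t ≤ (s ^ (m - 1)) ^ (m / (m - 1)) / (m / (m - 1)) + t ^ m / m :=
        young_inequality_of_nonneg (rpow_nonneg hs _) ht hconj
    _ = (m - 1) / m * s ^ m + t ^ m / m := by rw [hpow, div_div_eq_mul_div]; ring

lemma mul_div_mul_rpow_sub_one_le {m Ω s t : ℝ} (hm : 1 < m) (hΩ : 0 < Ω) (hs : 0 ≤ s)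
    (ht : 0 ≤ t) :
    t * (m / (m - 1) * s ^ (m - 1)) ≤ Ω⁻¹ * s ^ m + Ω ^ (m - 1) / (m - 1) * t ^ m := by
  have hm1 : 0 < m - 1 := by linarith
  have hyoung := rpow_sub_one_mul_le hm hs (mul_nonneg hΩ.le ht)
  rw [mul_rpow hΩ.le ht] at hyoung
  rw [rpow_sub_one hΩ.ne']
  calc t * (m / (m - 1) * s ^ (m - 1))
      = m / ((m - 1) * Ω) * (s ^ (m - 1) * (Ω * t)) := by field_simp
    _ ≤ m / ((m - 1) * Ω) * ((m - 1) / m * s ^ m + Ω ^ m * t ^ m / m) := by gcongr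
    _ = Ω⁻¹ * s ^ m + Ω ^ m / Ω / (m - 1) * t ^ m := by field_simp

lemma mul_div_mul_mul_rpow_sub_one {m Ω t : ℝ} (hm : 1 < m) (hΩ : 0 ≤ Ω) (ht : 0 ≤ t) :
    t * (m / (m - 1) * (Ω * t) ^ (m - 1)) = m / (m - 1) * Ω ^ (m - 1) * t ^ m := by
  rw [mul_rpow hΩ ht, ← mul_rpow_sub_one hm ht]
  ring

end Real

section Objective

variable {α : Type*} [MeasurableSpace α] {ν : Measure α} {m Ω : ℝ} {p h : α → ℝ}

noncomputable def entVarObjective (m : ℝ) (P Q : Measure α) (h : α → ℝ) : ℝ :=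
  (∫ x, (m / (m - 1)) * h x ^ (m - 1) ∂P) - ∫ x, h x ^ m ∂Q

lemma integral_withDensity_ofReal (hpm : Measurable p) (hp0 : ∀ x, 0 ≤ p x) (g : α → ℝ) :
    ∫ x, g x ∂ν.withDensity (fun x => ENNReal.ofReal (p x)) = ∫ x, p x * g x ∂ν := by
  rw [integral_withDensity_eq_integral_toReal_smul hpm.ennreal_ofReal
    (ae_of_all _ fun _ => ENNReal.ofReal_lt_top)]
  simp only [ENNReal.toReal_ofReal (hp0 _), smul_eq_mul]

lemma integrable_withDensity_ofReal_iff (hpm : Measurable p) (hp0 : ∀ x, 0 ≤ p x)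
    {g : α → ℝ} :
    Integrable g (ν.withDensity fun x => ENNReal.ofReal (p x)) ↔
      Integrable (fun x => p x * g x) ν := by
  rw [integrable_withDensity_iff_integrable_smul' hpm.ennreal_ofReal
    (ae_of_all _ fun _ => ENNReal.ofReal_lt_top)]
  simp only [ENNReal.toReal_ofReal (hp0 _), smul_eq_mul]

lemma integral_inv_ofReal_smul_measure (hΩ : 0 ≤ Ω) (g : α → ℝ) :
    ∫ x, g x ∂(ENNReal.ofReal Ω)⁻¹ • ν = Ω⁻¹ * ∫ x, g x ∂ν := by
  rw [integral_smul_measure, ENNReal.toReal_inv, ENNReal.toReal_ofReal hΩ, smul_eq_mul]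

lemma integrable_inv_ofReal_smul_measure_iff (hΩ : 0 < Ω) {g : α → ℝ} :
    Integrable g ((ENNReal.ofReal Ω)⁻¹ • ν) ↔ Integrable g ν :=
  integrable_smul_measure (by simp) (by simpa using hΩ)

lemma entVarObjective_le (hm : 1 < m) (hΩ : 0 < Ω) (hpm : Measurable p) (hp0 : ∀ x, 0 ≤ p x)
    (hp : Integrable (fun x => p x ^ m) ν) (hh0 : ∀ x, 0 ≤ h x)
    (hhP : Integrable (fun x => m / (m - 1) * h x ^ (m - 1))
      (ν.withDensity fun x => ENNReal.ofReal (p x)))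
    (hhQ : Integrable (fun x => h x ^ m) ν) :
    entVarObjective m (ν.withDensity fun x => ENNReal.ofReal (p x)) ((ENNReal.ofReal Ω)⁻¹ • ν) h
      ≤ Ω ^ (m - 1) / (m - 1) * ∫ x, p x ^ m ∂ν := by
  rw [integrable_withDensity_ofReal_iff hpm hp0] at hhP
  have hyoung : ∫ x, p x * (m / (m - 1) * h x ^ (m - 1)) ∂ν
      ≤ ∫ x, (Ω⁻¹ * h x ^ m + Ω ^ (m - 1) / (m - 1) * p x ^ m) ∂ν :=
    integral_mono hhP ((hhQ.const_mul _).add (hp.const_mul _))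
      fun x => Real.mul_div_mul_rpow_sub_one_le hm hΩ (hh0 x) (hp0 x)
  rw [integral_add (hhQ.const_mul _) (hp.const_mul _), integral_const_mul,
    integral_const_mul] at hyoung
  rw [entVarObjective, integral_withDensity_ofReal hpm hp0, integral_inv_ofReal_smul_measure hΩ.le]
  linarith

lemma entVarObjective_mul_density (hm : 1 < m) (hΩ : 0 < Ω) (hpm : Measurable p)
    (hp0 : ∀ x, 0 ≤ p x) :
    entVarObjective m (ν.withDensity fun x => ENNReal.ofReal (p x)) ((ENNReal.ofReal Ω)⁻¹ • ν)
      (fun x => Ω * p x) = Ω ^ (m - 1) / (m - 1) * ∫ x, p x ^ m ∂ν := by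
  have hm1 : m - 1 ≠ 0 := by linarith
  rw [entVarObjective, integral_withDensity_ofReal hpm hp0, integral_inv_ofReal_smul_measure hΩ.le]
  simp only [Real.mul_div_mul_mul_rpow_sub_one hm hΩ.le (hp0 _)]
  simp only [Real.mul_rpow hΩ.le (hp0 _), integral_const_mul, Real.rpow_sub_one hΩ.ne']
  field_simp
  ring

end Objective

lemma isGreatest_entVarSet {n : ℕ} {ν : Measure (Fin n → ℝ)} {m Ω : ℝ}
    {p : (Fin n → ℝ) → ℝ} (hm : 1 < m) (hΩ : 0 < Ω) (hpm : Measurable p) (hp0 : ∀ x, 0 ≤ p x)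
    (hp : Integrable (fun x => p x ^ m) ν) :
    IsGreatest (entVarSet m (ν.withDensity fun x => ENNReal.ofReal (p x))
      ((ENNReal.ofReal Ω)⁻¹ • ν)) (Ω ^ (m - 1) / (m - 1) * ∫ x, p x ^ m ∂ν) := by
  refine ⟨⟨fun x => Ω * p x, hpm.const_mul Ω, fun x => mul_nonneg hΩ.le (hp0 x), ?_, ?_,
    (entVarObjective_mul_density hm hΩ hpm hp0).symm⟩, ?_⟩
  · rw [integrable_withDensity_ofReal_iff hpm hp0]
    simp only [Real.mul_div_mul_mul_rpow_sub_one hm hΩ.le (hp0 _)]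
    exact hp.const_mul _
  · rw [integrable_inv_ofReal_smul_measure_iff hΩ]
    simp only [Real.mul_rpow hΩ.le (hp0 _)]
    exact hp.const_mul _
  · rintro r ⟨h, -, hh0, hhP, hhQ, rfl⟩
    exact entVarObjective_le hm hΩ hpm hp0 hp hh0 hhP
      ((integrable_inv_ofReal_smul_measure_iff hΩ).mp hhQ)

theorem generalizedEntropy_variational_general {n : ℕ} (m : ℝ) (hm : 1 < m)
    (p : (Fin n → ℝ) → ℝ) (hpm : Measurable p) (hp0 : ∀ x, 0 ≤ p x)
    (P : Measure (Fin n → ℝ))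
    (hP : P = volume.withDensity fun x => ENNReal.ofReal (p x))
    (S : Set (Fin n → ℝ)) (hS : MeasurableSet S)
    (Ω : ℝ) (hΩ : 0 < Ω)
    (hsupp : ∀ x, p x ≠ 0 → x ∈ S)
    (Q : Measure (Fin n → ℝ))
    (hQ : Q = (ENNReal.ofReal Ω)⁻¹ • volume.restrict S)
    (hGfin : Integrable (fun x => p x ^ m) volume) :
    (1 / (m - 1)) * (∫ x, p x ^ m) = Ω ^ (1 - m) * sSup (entVarSet m P Q)
    ∧ IsGreatest (entVarSet m P Q)
        ((∫ x, (m / (m - 1)) * (Ω * p x) ^ (m - 1) ∂P)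
          - ∫ x, (Ω * p x) ^ m ∂Q) := by
  have hp_compl : ∀ x ∉ S, p x = 0 := fun x hx => not_imp_comm.mp (hsupp x) hx
  have hPS : P = (volume.restrict S).withDensity fun x => ENNReal.ofReal (p x) := by
    rw [hP, ← withDensity_indicator hS]
    congr 1 with x
    by_cases hx : x ∈ S <;> simp [hx, hp_compl]
  have hIS : ∫ x in S, p x ^ m = ∫ x, p x ^ m :=
    setIntegral_eq_integral_of_forall_compl_eq_zero fun x hx => by
      rw [hp_compl x hx, Real.zero_rpow (by linarith)]
  have hmax := isGreatest_entVarSet hm hΩ hpm hp0 (hGfin.restrict (s := S))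
  have hvalue := entVarObjective_mul_density (ν := volume.restrict S) hm hΩ hpm hp0
  rw [← hPS, ← hQ, hIS] at hmax hvalue
  rw [← hvalue] at hmax
  refine ⟨?_, hmax⟩
  have hΩpow : Ω ^ (1 - m) * Ω ^ (m - 1) = 1 := by
    rw [← Real.rpow_add hΩ, sub_add_sub_cancel', sub_self, Real.rpow_zero]
  rw [hmax.csSup_eq, hvalue, ← mul_assoc, ← mul_div_assoc, hΩpow]

/-- Variational formula for the generalized entropy `G(P) = (1/(m−1)) ∫ P(x)^m dx`:
with `Q` the uniform probability measure on a set `S` of volume `Ω` containing the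
support of `P`, one has
`G(P) = Ω^{1−m} · sup_h { ∫ (m/(m−1)) h^{m−1} dP − ∫ h^m dQ }`, and the supremum is
attained at `h = dP/dQ = Ω·p`. -/
theorem generalizedEntropy_variational {n : ℕ} (m : ℝ) (hm : 1 < m)
    (p : (Fin n → ℝ) → ℝ) (hpm : Measurable p) (hp0 : ∀ x, 0 ≤ p x)
    (P : Measure (Fin n → ℝ))
    (hP : P = volume.withDensity fun x => ENNReal.ofReal (p x))
    [IsProbabilityMeasure P]
    (S : Set (Fin n → ℝ)) (hS : MeasurableSet S)
    (Ω : ℝ) (hΩ : 0 < Ω) (hvol : volume S = ENNReal.ofReal Ω)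
    (hsupp : ∀ x, p x ≠ 0 → x ∈ S)
    (Q : Measure (Fin n → ℝ))
    (hQ : Q = (ENNReal.ofReal Ω)⁻¹ • volume.restrict S)
    (hGfin : Integrable (fun x => p x ^ m) volume) :
    (1 / (m - 1)) * (∫ x, p x ^ m) = Ω ^ (1 - m) * sSup (entVarSet m P Q)
    ∧ IsGreatest (entVarSet m P Q)
        ((∫ x, (m / (m - 1)) * (Ω * p x) ^ (m - 1) ∂P)
          - ∫ x, (Ω * p x) ^ m ∂Q) :=
  generalizedEntropy_variational_general m hm p hpm hp0 P hP S hS Ω hΩ hsupp Q hQ hGfin
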